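/- Suppose the discrete quantities satisfy the structure update η^{n+1/3} − ηⁿ = Δt·v^{n+1/3} in L²(Γ) and ∫_Γ (v^{n+1/3} − vⁿ) ψ dz + Δt ∫_Γ ∇η^{n+1/3} · ∇ψ dz = 0 for all ψ ∈ H₀¹(Γ), with v^{n+1/3} ∈ H₀¹(Γ). Then the discrete energy identity holds: (1/2)(‖v^{n+1/3}‖²_{L²} + ‖∇η^{n+1/3}‖²_{L²}) + (1/2)(‖v^{n+1/3} − vⁿ‖²_{L²} + ‖∇η^{n+1/3} − ∇ηⁿ‖²_{L²}) = (1/2)(‖vⁿ‖²_{L²} + ‖∇ηⁿ‖²_{L²}). -/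

import Mathlib

open scoped RealInnerProductSpace

theorem two_mul_real_inner_sub_self_left {F : Type*} [NormedAddCommGroup F]
    [InnerProductSpace ℝ F] (a b : F) :
    2 * ⟪a - b, a⟫ = ‖a‖ ^ 2 + ‖a - b‖ ^ 2 - ‖b‖ ^ 2 := by
  rw [norm_sub_sq_real, inner_sub_left, real_inner_self_eq_norm_sq, real_inner_comm]
  ring

theorem stmt6_general {V L : Type*}
    [NormedAddCommGroup V] [InnerProductSpace ℝ V]
    [NormedAddCommGroup L] [InnerProductSpace ℝ L]
    (ι : V →L[ℝ] L) (grad : V →L[ℝ] L)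
    (Δt : ℝ)
    (ηn ηthird vthird : V) (vn : L)
    (hupdate : ηthird - ηn = Δt • vthird)
    (hweak : ∀ ψ : V, ⟪ι vthird - vn, ι ψ⟫ + Δt * ⟪grad ηthird, grad ψ⟫ = 0) :
    (1 / 2) * (‖ι vthird‖ ^ 2 + ‖grad ηthird‖ ^ 2)
      + (1 / 2) * (‖ι vthird - vn‖ ^ 2 + ‖grad ηthird - grad ηn‖ ^ 2)
      = (1 / 2) * (‖vn‖ ^ 2 + ‖grad ηn‖ ^ 2) := by
  have hgrad : grad ηthird - grad ηn = Δt • grad vthird := by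
    rw [← map_sub, hupdate, map_smul]
  have htest : ⟪ι vthird - vn, ι vthird⟫ + ⟪grad ηthird - grad ηn, grad ηthird⟫ = 0 := by
    rw [hgrad, real_inner_smul_left, real_inner_comm (grad ηthird)]
    exact hweak vthird
  have hv := two_mul_real_inner_sub_self_left (ι vthird) vn
  have hη := two_mul_real_inner_sub_self_left (grad ηthird) (grad ηn)
  linarith

/-- Discrete energy identity for the structure subproblem: if
`η^{n+1/3} − ηⁿ = Δt·v^{n+1/3}` and
`∫(v^{n+1/3} − vⁿ)ψ + Δt ∫ ∇η^{n+1/3}·∇ψ = 0` for all `ψ ∈ H₀¹(Γ)`, then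
`(1/2)(‖v^{n+1/3}‖² + ‖∇η^{n+1/3}‖²) + (1/2)(‖v^{n+1/3} − vⁿ‖² + ‖∇η^{n+1/3} − ∇ηⁿ‖²)
  = (1/2)(‖vⁿ‖² + ‖∇ηⁿ‖²)`.
Here `V = H₀¹(Γ)`, `L = L²(Γ)`, `ι` the embedding and `grad` the gradient. -/
theorem stmt6 {V L : Type*}
    [NormedAddCommGroup V] [InnerProductSpace ℝ V]
    [NormedAddCommGroup L] [InnerProductSpace ℝ L]
    (ι : V →L[ℝ] L) (grad : V →L[ℝ] L)
    (Δt : ℝ) (hΔt : 0 < Δt)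
    (ηn ηthird vthird : V) (vn : L)
    (hupdate : ηthird - ηn = Δt • vthird)
    (hweak : ∀ ψ : V, ⟪ι vthird - vn, ι ψ⟫ + Δt * ⟪grad ηthird, grad ψ⟫ = 0) :
    (1 / 2) * (‖ι vthird‖ ^ 2 + ‖grad ηthird‖ ^ 2)
      + (1 / 2) * (‖ι vthird - vn‖ ^ 2 + ‖grad ηthird - grad ηn‖ ^ 2)
      = (1 / 2) * (‖vn‖ ^ 2 + ‖grad ηn‖ ^ 2) :=
  stmt6_general ι grad Δt ηn ηthird vthird vn hupdate hweak
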